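/- arXiv:0812.0708 — 2 statements merged into one kernel-verified Lean document; each statement's English description precedes it below -/
import Mathlib

section
/- Let n ≥ 1 be an integer and let b, c ∈ ℝ with c ∉ {0, −1, …, −(n−1)}. Then every zero z₀ ∈ ℂ of the hypergeometric polynomial F(−n, b; c; z) with z₀ ≠ 0 and z₀ ≠ 1 is simple (has multiplicity one). In particular, multiple zeros of F(−n, b; c; z) can only occur at z = 0 or z = 1. -/
open Polynomial
open scoped Classical

/-- The hypergeometric polynomial `F(-n, b; c; z) = ∑_{k=0}^n ((-n)_k (b)_k / ((c)_k k!)) z^k`,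
viewed as a polynomial over `ℂ` (with real parameters `b`, `c`). -/
noncomputable def hypPoly (n : ℕ) (b c : ℝ) : Polynomial ℂ :=
  ∑ k ∈ Finset.range (n + 1),
    Polynomial.C ((((((ascPochhammer ℝ k).eval (-(n : ℝ))) * ((ascPochhammer ℝ k).eval b)) /
      (((ascPochhammer ℝ k).eval c) * (Nat.factorial k : ℝ))) : ℝ) : ℂ) * Polynomial.X ^ k

/-- Number of zeros of `p`, counted with multiplicity, lying in the set `S ⊆ ℂ`. -/
noncomputable def countIn (p : Polynomial ℂ) (S : Set ℂ) : ℕ :=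
  Multiset.card (p.roots.filter (fun z => z ∈ S))

/-!
A double zero `z₀ ∉ {0, 1}` of `F = F(-n, b; c; z)` is impossible because `F` solves the
hypergeometric equation `z(1 - z) F'' + (c - (b + 1 - n) z) F' + n b F = 0`, whose leading
coefficient does not vanish at `z₀`. If `(X - z₀)^m` exactly divides `F` with `m ≥ 2`, then
`(X - z₀)^(m-1)` divides `F` and `F'`, hence `F''`; integrating twice (using `F'(z₀) = F(z₀) = 0`)
gives `(X - z₀)^(m+1) ∣ F`.
-/

namespace Polynomial

variable {R : Type*} [CommRing R] [IsDomain R] [CharZero R]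

theorem pow_succ_dvd_of_isRoot_of_pow_dvd_derivative {Q : R[X]} {z : R} {k : ℕ}
    (hQ : Q.IsRoot z) (h : (X - C z) ^ (k + 1) ∣ derivative Q) : (X - C z) ^ (k + 2) ∣ Q := by
  rcases eq_or_ne Q 0 with rfl | hQ0
  · exact dvd_zero _
  have hQ' : derivative Q ≠ 0 := by
    intro h0
    rw [eq_C_of_derivative_eq_zero h0, IsRoot, eval_C] at hQ
    exact hQ0 (by rw [eq_C_of_derivative_eq_zero h0, hQ, C_0])
  have := (le_rootMultiplicity_iff hQ').2 h
  rw [derivative_rootMultiplicity_of_root hQ] at this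
  exact (le_rootMultiplicity_iff hQ0).1 (by omega)

theorem rootMultiplicity_le_one_of_ode {K : Type*} [Field K] [CharZero K] {P p₀ p₁ p₂ : K[X]}
    {z : K} (hode : p₂ * derivative (derivative P) + p₁ * derivative P + p₀ * P = 0)
    (hz : p₂.eval z ≠ 0) : P.rootMultiplicity z ≤ 1 := by
  by_contra! hm
  have hP0 : P ≠ 0 := by rintro rfl; simp at hm
  obtain ⟨hP, hP'⟩ := (one_lt_rootMultiplicity_iff_isRoot hP0).1 hm
  obtain ⟨k, hk⟩ : ∃ k, P.rootMultiplicity z = k + 2 := ⟨P.rootMultiplicity z - 2, by omega⟩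
  have hdvdP : (X - C z) ^ (k + 1) ∣ P :=
    (pow_dvd_pow _ (by omega)).trans (hk ▸ pow_rootMultiplicity_dvd P z)
  have hdvdP' : (X - C z) ^ (k + 1) ∣ derivative P := by
    simpa [hk] using pow_sub_one_dvd_derivative_of_pow_dvd (pow_rootMultiplicity_dvd P z)
  have hdvd₂ : (X - C z) ^ (k + 1) ∣ p₂ * derivative (derivative P) := by
    rw [show p₂ * derivative (derivative P) = -(p₁ * derivative P + p₀ * P) by
      linear_combination hode]
    exact (dvd_add (hdvdP'.mul_left _) (hdvdP.mul_left _)).neg_right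
  have hcop : IsCoprime ((X - C z) ^ (k + 1)) p₂ :=
    ((irreducible_X_sub_C z).coprime_iff_not_dvd.2 (by rwa [dvd_iff_isRoot])).pow_left
  have hdvdP'' := hcop.dvd_of_dvd_mul_left hdvd₂
  have hdvd_succ := pow_succ_dvd_of_isRoot_of_pow_dvd_derivative hP
    (pow_succ_dvd_of_isRoot_of_pow_dvd_derivative hP' hdvdP'')
  exact pow_rootMultiplicity_not_dvd hP0 z (hk ▸ hdvd_succ)

end Polynomial

section Hypergeometric

variable (n : ℕ) (b c : ℝ)

noncomputable def hypCoeff (k : ℕ) : ℝ :=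
  (ascPochhammer ℝ k).eval (-(n : ℝ)) * (ascPochhammer ℝ k).eval b /
    ((ascPochhammer ℝ k).eval c * k.factorial)

theorem hypCoeff_eq_zero_of_lt {k : ℕ} (hk : n < k) : hypCoeff n b c k = 0 := by
  have : (ascPochhammer ℝ k).eval (-(n : ℝ)) = 0 :=
    (ascPochhammer_eval_eq_zero_iff _ _).2 ⟨n, hk, by ring⟩
  simp [hypCoeff, this]

theorem coeff_hypPoly (k : ℕ) : (hypPoly n b c).coeff k = hypCoeff n b c k := by
  simp only [hypPoly, finsetSum_coeff, coeff_C_mul_X_pow, Finset.sum_ite_eq, Finset.mem_range]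
  split_ifs with hk
  · rfl
  · rw [hypCoeff_eq_zero_of_lt n b c (by omega), Complex.ofReal_zero]

theorem hypPoly_ne_zero : hypPoly n b c ≠ 0 := by
  intro h
  simpa [h, hypCoeff] using coeff_hypPoly n b c 0

variable {n c}

theorem succ_mul_hypCoeff_succ (hc : ∀ k : ℕ, k < n → c ≠ -(k : ℝ)) (k : ℕ) :
    (k + 1) * (c + k) * hypCoeff n b c (k + 1) = (k - n) * (b + k) * hypCoeff n b c k := by
  rcases lt_or_ge k n with hk | hk
  · have hck : (ascPochhammer ℝ k).eval c ≠ 0 := by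
      rw [Ne, ascPochhammer_eval_eq_zero_iff]
      rintro ⟨j, hj, hje⟩
      exact hc j (hj.trans hk) (by linarith)
    have hck' : c + k ≠ 0 := fun h => hc k hk (by linarith)
    simp only [hypCoeff, ascPochhammer_succ_eval, Nat.factorial_succ, Nat.cast_mul, Nat.cast_succ]
    field_simp
    ring
  · rw [hypCoeff_eq_zero_of_lt n b c (by omega : n < k + 1)]
    rcases hk.eq_or_lt with rfl | hk'
    · simp
    · simp [hypCoeff_eq_zero_of_lt n b c hk']

theorem hypPoly_ode (hc : ∀ k : ℕ, k < n → c ≠ -(k : ℝ)) :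
    X * (1 - X) * derivative (derivative (hypPoly n b c))
      + (C (c : ℂ) - C ((b : ℂ) + 1 - n) * X) * derivative (hypPoly n b c)
      + C ((n : ℂ) * b) * hypPoly n b c = 0 := by
  ext j
  have hrec := congrArg (fun x : ℝ => (x : ℂ)) (succ_mul_hypCoeff_succ b hc j)
  rcases j with _ | _ | j <;>
    simp only [mul_sub, sub_mul, add_mul, mul_one, one_mul, mul_assoc, map_sub, map_add, map_one,
      map_mul, map_natCast, coeff_add, coeff_sub, coeff_X_mul, mul_coeff_zero, coeff_X_zero,
      coeff_C_mul, coeff_C_zero, coeff_natCast_mul, coeff_natCast_ite, coeff_derivative,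
      coeff_hypPoly, coeff_zero, Complex.ofReal_add, Complex.ofReal_sub, Complex.ofReal_mul,
      Complex.ofReal_natCast, Nat.cast_add, Nat.cast_one, zero_add, zero_mul,
      sub_zero, Complex.ofReal_zero, CharP.cast_eq_zero, if_true] at hrec ⊢ <;>
    linear_combination hrec

end Hypergeometric

theorem hypPoly_zero_ne_zero_one_simple_general (n : ℕ) (b c : ℝ)
    (hc : ∀ k : ℕ, k < n → c ≠ -(k : ℝ))
    (z₀ : ℂ) (hz₀ : z₀ ≠ 0) (hz₁ : z₀ ≠ 1)
    (hroot : (hypPoly n b c).IsRoot z₀) :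
    (hypPoly n b c).rootMultiplicity z₀ = 1 := by
  have hlead : (X * (1 - X) : ℂ[X]).eval z₀ ≠ 0 := by
    simpa using mul_ne_zero hz₀ (sub_ne_zero.2 hz₁.symm)
  have hle := rootMultiplicity_le_one_of_ode (hypPoly_ode b hc) hlead
  have hpos := (rootMultiplicity_pos (hypPoly_ne_zero n b c)).2 hroot
  omega

/-- Every zero of `F(-n, b; c; z)` other than `0` and `1` is simple. -/
theorem hypPoly_zero_ne_zero_one_simple (n : ℕ) (hn : 1 ≤ n) (b c : ℝ)
    (hc : ∀ k : ℕ, k < n → c ≠ -(k : ℝ))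
    (z₀ : ℂ) (hz₀ : z₀ ≠ 0) (hz₁ : z₀ ≠ 1)
    (hroot : (hypPoly n b c).IsRoot z₀) :
    (hypPoly n b c).rootMultiplicity z₀ = 1 :=
  hypPoly_zero_ne_zero_one_simple_general n b c hc z₀ hz₀ hz₁ hroot
end

section
/- Let n ≥ 1 be an integer. For every real b < 1 − n, all n zeros of F(−n, b; 2b; z) are real and greater than 1. Moreover, the zeros converge to the point z = 2 as b → −∞: for every ε > 0 there exists B ∈ ℝ such that for all b < B, every zero z of F(−n, b; 2b; z) satisfies |z − 2| < ε. -/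
/-!
For `b < 1 - n` every ratio `(b)ₖ / (2b)ₖ` with `k ≤ n` is positive, and the polynomials
`Fₙ = F(-n, b; 2b; x)` satisfy Gauss's contiguous relation
`(2b + n) Fₙ₊₁ = (2n + 2b - (b + n) x) Fₙ + n (x - 1) Fₙ₋₁`. At a zero `x > 1` of `Fₙ` it says
that `Fₙ₊₁(x)` and `Fₙ₋₁(x)` have opposite signs, since `2b + n < 0`. Together with
`Fₙ₊₁(1) = (b)ₙ₊₁ / (2b)ₙ₊₁ > 0` (Chu–Vandermonde) and the sign of the leading coefficient, the
intermediate value theorem puts one zero of `Fₙ₊₁` in each gap of `1 < s₀ < ⋯ < sₙ₋₁ < ∞`,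
where the `sᵢ` are the zeros of `Fₙ`. Inductively the zeros are simple, real, greater than `1`
and interlace.

As `b → -∞` the coefficients of `Fₙ` tend to those of `(1 - z/2)ⁿ`. At a zero `z` of `Fₙ`,
`(1 - z/2)ⁿ` is then the value at `z` of a polynomial with small coefficients, which forces `z`
close to `2`.
-/

open Polynomial
open scoped Classical

open Filter Topology Finset

noncomputable def pochRatio (b c : ℝ) (k : ℕ) : ℝ :=
  (ascPochhammer ℝ k).eval b / (ascPochhammer ℝ k).eval c

/-- `F(-n, b; c; x)` over `ℝ`, using `(-n)ₖ / k! = (-1)ᵏ C(n, k)`. -/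
noncomputable def hypPolyReal (n : ℕ) (b c : ℝ) : ℝ[X] :=
  ∑ k ∈ range (n + 1), C ((-1) ^ k * n.choose k * pochRatio b c k) * X ^ k

lemma pochRatio_zero (b c : ℝ) : pochRatio b c 0 = 1 := by simp [pochRatio]

lemma pochRatio_succ (b c : ℝ) (k : ℕ) :
    pochRatio b c (k + 1) = pochRatio b c k * ((b + k) / (c + k)) := by
  simp only [pochRatio, ascPochhammer_succ_eval, mul_div_mul_comm]

lemma ascPochhammer_eval_neg_natCast (n k : ℕ) :
    (ascPochhammer ℝ k).eval (-(n : ℝ)) = (-1) ^ k * (k.factorial * n.choose k) := by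
  rw [ascPochhammer_eval_neg_eq_descPochhammer, descPochhammer_eval_eq_descFactorial,
    Nat.descFactorial_eq_factorial_mul_choose]
  push_cast
  ring

lemma hypPoly_eq_map (n : ℕ) (b c : ℝ) :
    hypPoly n b c = (hypPolyReal n b c).map (algebraMap ℝ ℂ) := by
  simp only [hypPoly, hypPolyReal, Polynomial.map_sum, Polynomial.map_mul, map_C,
    Polynomial.map_pow, map_X]
  refine sum_congr rfl fun k _ => ?_
  rw [ascPochhammer_eval_neg_natCast, pochRatio, Complex.coe_algebraMap]
  congr 3
  rw [div_eq_mul_inv, mul_inv]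
  field_simp

lemma coeff_hypPolyReal (n : ℕ) (b c : ℝ) (k : ℕ) :
    (hypPolyReal n b c).coeff k = (-1) ^ k * n.choose k * pochRatio b c k := by
  simp only [hypPolyReal, finsetSum_coeff, coeff_C_mul_X_pow]
  rw [sum_ite_eq (range (n + 1)) k]
  split_ifs with hk
  · rfl
  · rw [Nat.choose_eq_zero_of_lt (by simpa using hk)]; simp

lemma hypPolyReal_zero (b c : ℝ) : hypPolyReal 0 b c = 1 := by
  simp [hypPolyReal, pochRatio_zero]

lemma natDegree_hypPolyReal_le (n : ℕ) (b c : ℝ) : (hypPolyReal n b c).natDegree ≤ n :=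
  natDegree_le_iff_coeff_eq_zero.mpr fun k hk => by
    rw [coeff_hypPolyReal, Nat.choose_eq_zero_of_lt (by exact_mod_cast hk)]; simp

lemma leadingCoeff_hypPolyReal {n : ℕ} {b c : ℝ} (h : pochRatio b c n ≠ 0) :
    (hypPolyReal n b c).natDegree = n ∧
      (hypPolyReal n b c).leadingCoeff = (-1) ^ n * pochRatio b c n := by
  have hcoeff : (hypPolyReal n b c).coeff n = (-1) ^ n * pochRatio b c n := by
    rw [coeff_hypPolyReal, Nat.choose_self, Nat.cast_one, mul_one]
  have hdeg : (hypPolyReal n b c).natDegree = n :=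
    natDegree_eq_of_le_of_coeff_ne_zero (natDegree_hypPolyReal_le n b c)
      (by rw [hcoeff]; exact mul_ne_zero (pow_ne_zero _ (by norm_num)) h)
  exact ⟨hdeg, by rw [leadingCoeff, hdeg, hcoeff]⟩

lemma natCast_choose_succ_mul (n k : ℕ) :
    (n.choose (k + 1) : ℝ) * (k + 1) = n.choose k * (n - k) := by
  rcases le_or_gt k n with h | h
  · have := congrArg (Nat.cast (R := ℝ)) (Nat.choose_succ_right_eq n k)
    push_cast [h] at this
    exact this
  · rw [Nat.choose_eq_zero_of_lt h, Nat.choose_eq_zero_of_lt (by omega)]; simp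

lemma natCast_mul_choose_sub_one (n k : ℕ) :
    (n : ℝ) * (n - 1).choose k = n.choose k * (n - k) := by
  rcases n with _ | m
  · rcases k with _ | k <;> simp
  · rcases le_or_gt k (m + 1) with h | h
    · have := congrArg (Nat.cast (R := ℝ)) (Nat.choose_mul_succ_eq m k)
      push_cast [h] at this
      simpa [mul_comm] using this
    · rw [Nat.choose_eq_zero_of_lt h, Nat.choose_eq_zero_of_lt (by omega)]; simp

/-- Gauss's contiguous relation in the parameter `-n`. -/
lemma hypPolyReal_recurrence {n : ℕ} {b c : ℝ} (hc : ∀ j ≤ n, c + j ≠ 0) :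
    C (c + n) * hypPolyReal (n + 1) b c =
      (C (2 * n + c) - C (b + n) * X) * hypPolyReal n b c +
        C (n : ℝ) * (X - 1) * hypPolyReal (n - 1) b c := by
  ext (_ | j)
  · simp [coeff_hypPolyReal, pochRatio_zero, mul_sub, sub_mul]
    ring
  · simp only [coeff_add, coeff_sub, coeff_C_mul, mul_sub, sub_mul, mul_assoc, coeff_X_mul,
      one_mul, coeff_hypPolyReal]
    rcases le_or_gt j n with hj | hj
    · have hratio : pochRatio b c (j + 1) * (c + j) = pochRatio b c j * (b + j) := by
        rw [pochRatio_succ, mul_assoc, div_mul_cancel₀ _ (hc j hj)]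
      have hpascal : ((n + 1).choose (j + 1) : ℝ) = n.choose j + n.choose (j + 1) := by
        exact_mod_cast Nat.choose_succ_succ n j
      have hpred := natCast_mul_choose_sub_one n (j + 1)
      push_cast at hpred
      linear_combination (-1) ^ (j + 1) * ((c + n) * pochRatio b c (j + 1) * hpascal
        + pochRatio b c j * natCast_mul_choose_sub_one n j + pochRatio b c (j + 1) * hpred
        - pochRatio b c (j + 1) * natCast_choose_succ_mul n j + (n.choose j : ℝ) * hratio)
    · rw [Nat.choose_eq_zero_of_lt hj, Nat.choose_eq_zero_of_lt (by omega : n + 1 < j + 1),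
        Nat.choose_eq_zero_of_lt (by omega : n < j + 1), Nat.choose_eq_zero_of_lt (by omega),
        Nat.choose_eq_zero_of_lt (by omega : n - 1 < j + 1)]
      simp

/-- Chu–Vandermonde. -/
lemma eval_one_hypPolyReal {n : ℕ} {b c : ℝ} (hc : ∀ j < n, c + j ≠ 0) :
    (hypPolyReal n b c).eval 1 = pochRatio (c - b) c n := by
  induction n with
  | zero => simp [hypPolyReal, pochRatio_zero]
  | succ n ih =>
    have hrec := congrArg (eval 1)
      (hypPolyReal_recurrence (n := n) (b := b) fun j hj => hc j (by omega))
    simp only [eval_mul, eval_add, eval_sub, eval_C, eval_X, eval_one, sub_self, mul_zero,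
      zero_mul, add_zero, ih fun j hj => hc j (by omega)] at hrec
    rw [pochRatio_succ, mul_div_assoc', eq_div_iff (hc n n.lt_succ_self)]
    linear_combination hrec

lemma neg_one_pow_sub_mul_prod_sub_pos {m k : ℕ} (s : Fin m → ℝ) {x : ℝ} (hk : k ≤ m)
    (hlt : ∀ i : Fin m, (i : ℕ) < k → s i < x) (hgt : ∀ i : Fin m, k ≤ (i : ℕ) → x < s i) :
    0 < (-1) ^ (m - k) * ∏ i, (x - s i) := by
  induction m with
  | zero => simp
  | succ m ih =>
    rw [Fin.prod_univ_castSucc]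
    rcases hk.lt_or_eq with hk | rfl
    · have hprod := ih (fun i => s i.castSucc) (by omega) (fun i hi => hlt _ hi)
        (fun i hi => hgt _ hi)
      have hlast : x - s (Fin.last m) < 0 := sub_neg.2 (hgt _ (by simp; omega))
      rw [show m + 1 - k = m - k + 1 by omega, pow_succ]
      nlinarith [mul_pos hprod (neg_pos.2 hlast)]
    · simpa using mul_pos (prod_pos fun i _ => sub_pos.2 (hlt _ (by simp)))
        (sub_pos.2 (hlt (Fin.last m) (by simp)))

lemma roots_eq_map_of_injective {R : Type*} [CommRing R] [IsDomain R] {p : R[X]} {m : ℕ}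
    (hp : p ≠ 0) (hdeg : p.natDegree ≤ m) {t : Fin m → R} (ht : Function.Injective t)
    (hroot : ∀ k, p.IsRoot (t k)) :
    p.roots = univ.val.map t := by
  have hnodup : (univ.val.map t).Nodup := univ.nodup.map ht
  refine (Multiset.eq_of_le_of_card_le ((Multiset.le_iff_subset hnodup).2 fun z hz => ?_) ?_).symm
  · obtain ⟨k, -, rfl⟩ := Multiset.mem_map.1 hz
    exact (mem_roots hp).2 (hroot k)
  · simpa using (card_roots' p).trans hdeg

lemma exists_roots_eq_of_alternating {p : ℝ[X]} {m : ℕ} (hdeg : p.natDegree ≤ m)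
    {x : Fin (m + 1) → ℝ} (hx : StrictMono x)
    (hsign : ∀ k : Fin (m + 1), 0 < (-1) ^ (k : ℕ) * p.eval (x k)) :
    ∃ t : Fin m → ℝ, StrictMono t ∧ (∀ k, x k.castSucc < t k ∧ t k < x k.succ) ∧
      p.roots = univ.val.map t := by
  have hroot : ∀ k : Fin m, ∃ t, x k.castSucc < t ∧ t < x k.succ ∧ p.IsRoot t := by
    intro k
    have hl := hsign k.castSucc
    have hr := hsign k.succ
    simp only [Fin.val_castSucc, Fin.val_succ, pow_succ] at hl hr
    have hcont : ContinuousOn (fun y => p.eval y) (Set.Icc (x k.castSucc) (x k.succ)) :=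
      p.continuous.continuousOn
    have hlt := (hx k.castSucc_lt_succ).le
    rcases neg_one_pow_eq_or ℝ (k : ℕ) with h | h <;> rw [h] at hl hr
    · obtain ⟨t, ht, h0⟩ := intermediate_value_Ioo' hlt hcont
        (show (0 : ℝ) ∈ Set.Ioo _ _ from ⟨by linarith, by linarith⟩)
      exact ⟨t, ht.1, ht.2, h0⟩
    · obtain ⟨t, ht, h0⟩ := intermediate_value_Ioo hlt hcont
        (show (0 : ℝ) ∈ Set.Ioo _ _ from ⟨by linarith, by linarith⟩)
      exact ⟨t, ht.1, ht.2, h0⟩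
  choose t ht using hroot
  have hmono : StrictMono t := fun i j hij =>
    ((ht i).2.1.trans_le (hx.monotone (Fin.succ_le_castSucc_iff.2 hij))).trans (ht j).1
  refine ⟨t, hmono, fun k => ⟨(ht k).1, (ht k).2.1⟩, ?_⟩
  have hp : p ≠ 0 := fun h => by simpa [h] using hsign 0
  exact roots_eq_map_of_injective hp hdeg hmono.injective fun k => (ht k).2.2

lemma eventually_pos_mul_eval {p : ℝ[X]} {e : ℝ} (hdeg : 0 < p.natDegree)
    (he : 0 < e * p.leadingCoeff) : ∀ᶠ x in atTop, 0 < e * p.eval x := by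
  have he0 : e ≠ 0 := by rintro rfl; simp at he
  have hlim := tendsto_atTop_of_leadingCoeff_nonneg (C e * p)
    (by rw [degree_C_mul he0]; exact natDegree_pos_iff_degree_pos.1 hdeg)
    (by rw [leadingCoeff_mul, leadingCoeff_C]; exact he.le)
  simpa using hlim.eventually_gt_atTop 0

lemma eval_eq_leadingCoeff_mul_prod {R : Type*} [CommRing R] [IsDomain R] {q : R[X]} {m : ℕ}
    {s : Fin m → R} (hq : q.natDegree = m) (hroots : q.roots = univ.val.map s) (x : R) :
    q.eval x = q.leadingCoeff * ∏ i, (x - s i) := by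
  have hcard : Multiset.card q.roots = q.natDegree := by simp [hroots, hq]
  have hfac := C_leadingCoeff_mul_prod_multiset_X_sub_C hcard
  rw [hroots, Multiset.map_map, ← prod_eq_multiset_prod] at hfac
  conv_lhs => rw [← hfac]
  simp [eval_prod]

lemma neg_one_pow_mul_eval_pos {q : ℝ[X]} {m k : ℕ} {s : Fin m → ℝ} (hq : q.natDegree = m)
    (hqlc : 0 < (-1) ^ m * q.leadingCoeff) (hroots : q.roots = univ.val.map s) {x : ℝ}
    (hk : k ≤ m) (hlt : ∀ i : Fin m, (i : ℕ) < k → s i < x)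
    (hgt : ∀ i : Fin m, k ≤ (i : ℕ) → x < s i) :
    0 < (-1) ^ k * q.eval x := by
  have hpow : (-1 : ℝ) ^ k = (-1) ^ m * (-1) ^ (m - k) := by
    rw [← pow_add, show m + (m - k) = k + 2 * (m - k) by omega, pow_add, pow_mul]
    norm_num
  rw [eval_eq_leadingCoeff_mul_prod hq hroots, hpow]
  exact mul_mul_mul_comm ((-1 : ℝ) ^ m) _ q.leadingCoeff _ ▸
    mul_pos hqlc (neg_one_pow_sub_mul_prod_sub_pos s hk hlt hgt)

def AlternatesOnRoots (a : ℝ) (p q : ℝ[X]) (m : ℕ) : Prop :=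
  ∃ s : Fin m → ℝ, StrictMono s ∧ (∀ i, a < s i) ∧ q.roots = univ.val.map s ∧
    ∀ i : Fin m, 0 < (-1) ^ (i : ℕ) * p.eval (s i)

/-- One step of the interlacing argument for a three-term recurrence: the zeros of `r` are
separated by `a`, the zeros of `q` and a point far to the right. -/
theorem AlternatesOnRoots.succ {a : ℝ} {p q r : ℝ[X]} {m : ℕ} (h : AlternatesOnRoots a p q m)
    (hq : q.natDegree = m) (hqlc : 0 < (-1) ^ m * q.leadingCoeff)
    (hr : r.natDegree = m + 1) (hrlc : 0 < (-1) ^ (m + 1) * r.leadingCoeff) (hra : 0 < r.eval a)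
    (hrec : ∀ x, q.IsRoot x → a < x → ∃ κ < 0, r.eval x = κ * p.eval x) :
    AlternatesOnRoots a q r (m + 1) := by
  obtain ⟨s, hs, has, hroots, hsign⟩ := h
  obtain ⟨M, hrM, hMa, hMs⟩ := ((eventually_pos_mul_eval (by omega) hrlc).and
    ((eventually_gt_atTop a).and (eventually_all.2 fun i => eventually_gt_atTop (s i)))).exists
  set x : Fin (m + 2) → ℝ := Fin.snoc (Fin.cons a s) M with hxdef
  have hx : StrictMono x := by
    rw [hxdef, ← Fin.insertNth_last', Fin.strictMono_insertNth_iff]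
    refine ⟨Fin.strictMono_cons.2 ⟨has, hs⟩, fun i _ => ?_,
      fun i hi => absurd hi (not_le.2 (Fin.castSucc_lt_last i))⟩
    cases i using Fin.cases <;> simp [hMa, hMs]
  have hrsign : ∀ k : Fin (m + 2), 0 < (-1) ^ (k : ℕ) * r.eval (x k) := by
    intro k
    cases k using Fin.lastCases with
    | last => simpa [hxdef] using hrM
    | cast j =>
      cases j using Fin.cases with
      | zero => simpa [hxdef] using hra
      | succ i =>
        have hroot : q.IsRoot (s i) := (mem_roots'.1 (by simp [hroots])).2
        obtain ⟨κ, hκ, hκr⟩ := hrec (s i) hroot (has i)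
        simp only [hxdef, Fin.snoc_castSucc, Fin.cons_succ, Fin.val_castSucc, Fin.val_succ,
          hκr, pow_succ]
        nlinarith [hsign i]
  obtain ⟨t, ht, hxt, hroots'⟩ := exists_roots_eq_of_alternating hr.le hx hrsign
  have hxs : ∀ i, x i.succ.castSucc = s i := fun i => by
    rw [hxdef, Fin.snoc_castSucc, Fin.cons_succ]
  refine ⟨t, ht, fun k => ?_, hroots', fun k : Fin (m + 1) => ?_⟩
  · calc a = x 0 := by simp [hxdef]
      _ ≤ x k.castSucc := hx.monotone (Fin.zero_le _)
      _ < t k := (hxt k).1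
  · exact neg_one_pow_mul_eval_pos hq hqlc hroots k.is_le
      (fun i hi => hxs i ▸ (hx.monotone (Fin.le_def.2 (by simp; omega))).trans_lt (hxt k).1)
      (fun i hi => hxs i ▸ (hxt k).2.trans_le (hx.monotone (Fin.le_def.2 (by simp; omega))))

section BelowOneSubN

variable {N : ℕ} {b : ℝ}

lemma two_mul_add_natCast_neg (hb : b < 1 - N) {j : ℕ} (hj : j < N) : 2 * b + j < 0 := by
  have : (j : ℝ) + 1 ≤ N := by exact_mod_cast hj
  linarith

lemma pochRatio_two_mul_pos (hb : b < 1 - N) {k : ℕ} (hk : k ≤ N) :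
    0 < pochRatio b (2 * b) k := by
  induction k with
  | zero => simp [pochRatio_zero]
  | succ k ih =>
    have hkN : (k : ℝ) + 1 ≤ N := by exact_mod_cast hk
    rw [pochRatio_succ]
    exact mul_pos (ih (by omega)) (div_pos_of_neg_of_neg (by linarith)
      (two_mul_add_natCast_neg hb (by omega)))

lemma natDegree_hypPolyReal_two_mul (hb : b < 1 - N) {n : ℕ} (hn : n ≤ N) :
    (hypPolyReal n b (2 * b)).natDegree = n ∧
      0 < (-1) ^ n * (hypPolyReal n b (2 * b)).leadingCoeff := by
  have hpos := pochRatio_two_mul_pos hb hn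
  obtain ⟨hdeg, hlc⟩ := leadingCoeff_hypPolyReal hpos.ne'
  refine ⟨hdeg, ?_⟩
  rwa [hlc, ← mul_assoc, ← mul_pow, neg_one_mul, neg_neg, one_pow, one_mul]

lemma alternatesOnRoots_hypPolyReal_two_mul (hb : b < 1 - N) :
    ∀ n ≤ N, AlternatesOnRoots 1 (hypPolyReal (n - 1) b (2 * b)) (hypPolyReal n b (2 * b)) n
  | 0, _ => ⟨Fin.elim0, fun i => i.elim0, fun i => i.elim0, by simp [hypPolyReal_zero],
      fun i => i.elim0⟩
  | n + 1, hn => by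
    obtain ⟨hq, hqlc⟩ := natDegree_hypPolyReal_two_mul hb (n := n) (by omega)
    obtain ⟨hr, hrlc⟩ := natDegree_hypPolyReal_two_mul hb hn
    have hone : 0 < (hypPolyReal (n + 1) b (2 * b)).eval 1 := by
      rw [eval_one_hypPolyReal fun j hj => (two_mul_add_natCast_neg hb (by omega)).ne,
        two_mul, add_sub_cancel_right, ← two_mul]
      exact pochRatio_two_mul_pos hb hn
    refine (alternatesOnRoots_hypPolyReal_two_mul hb n (by omega)).succ hq hqlc hr hrlc hone
      fun x hx hx1 => ?_
    rcases n with _ | n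
    · simp [hypPolyReal_zero] at hx
    have hneg := two_mul_add_natCast_neg hb (j := n + 1) (by omega)
    have hrec := congrArg (eval x) (hypPolyReal_recurrence (n := n + 1) (b := b) (c := 2 * b)
      fun j hj => (two_mul_add_natCast_neg hb (by omega)).ne)
    simp only [eval_mul, eval_add, eval_sub, eval_C, eval_X, eval_one, hx.eq_zero, mul_zero,
      zero_add] at hrec
    refine ⟨(n + 1) * (x - 1) / (2 * b + (n + 1 : ℕ)), div_neg_of_pos_of_neg
      (by positivity) hneg, ?_⟩
    rw [div_mul_eq_mul_div, eq_div_iff hneg.ne]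
    push_cast at hrec ⊢
    linear_combination hrec

end BelowOneSubN

lemma exists_roots_hypPoly_two_mul {n : ℕ} {b : ℝ} (hb : b < 1 - n) :
    ∃ s : Fin n → ℝ, (∀ i, 1 < s i) ∧
      (hypPoly n b (2 * b)).roots = univ.val.map fun i => (s i : ℂ) := by
  obtain ⟨s, -, hs1, hroots, -⟩ := alternatesOnRoots_hypPolyReal_two_mul hb n le_rfl
  have hcard : Multiset.card (hypPolyReal n b (2 * b)).roots =
      (hypPolyReal n b (2 * b)).natDegree := by
    rw [hroots, (natDegree_hypPolyReal_two_mul hb le_rfl).1]; simp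
  refine ⟨s, hs1, ?_⟩
  rw [hypPoly_eq_map,
    ← roots_map_of_injective_of_card_eq_natDegree (algebraMap ℝ ℂ).injective hcard, hroots,
    Multiset.map_map]
  rfl

section RootLocalization

variable {𝕜 : Type*} [NormedField 𝕜]

lemma norm_eval_le_of_norm_coeff_le {p : 𝕜[X]} {n : ℕ} {δ ρ : ℝ} (hp : p.natDegree ≤ n)
    (hcoeff : ∀ k ≤ n, ‖p.coeff k‖ ≤ δ) (hρ : 1 ≤ ρ) {z : 𝕜} (hz : ‖z‖ ≤ ρ) :
    ‖p.eval z‖ ≤ (n + 1) * δ * ρ ^ n := by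
  have hδ : 0 ≤ δ := (norm_nonneg _).trans (hcoeff 0 n.zero_le)
  rw [eval_eq_sum_range' (Nat.lt_succ_of_le hp)]
  calc ‖∑ k ∈ range (n + 1), p.coeff k * z ^ k‖
      ≤ ∑ k ∈ range (n + 1), ‖p.coeff k‖ * ‖z‖ ^ k := by
        simpa only [norm_mul, norm_pow] using
          norm_sum_le (range (n + 1)) fun k => p.coeff k * z ^ k
    _ ≤ ∑ _k ∈ range (n + 1), δ * ρ ^ n := by
        refine sum_le_sum fun k hk => ?_
        have hkn : k ≤ n := by simpa [Nat.lt_succ_iff] using hk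
        exact mul_le_mul (hcoeff k hkn) ((pow_le_pow_left₀ (norm_nonneg z) hz k).trans
          (pow_le_pow_right₀ hρ hkn)) (by positivity) hδ
    _ = (n + 1) * δ * ρ ^ n := by simp [mul_assoc]

lemma eventually_forall_mem_roots_norm_sub_lt {ι : Type*} {l : Filter ι} {p : ι → 𝕜[X]} {n : ℕ}
    {a w : 𝕜} (ha : a ≠ 0) (hdeg : ∀ i, (p i).natDegree ≤ n)
    (hcoeff : ∀ k, Tendsto (fun i => (p i).coeff k) l (𝓝 ((C a * (X - C w) ^ n).coeff k)))
    {ε : ℝ} (hε : 0 < ε) : ∀ᶠ i in l, ∀ z ∈ (p i).roots, ‖z - w‖ < ε := by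
  set q : 𝕜[X] := C a * (X - C w) ^ n
  set R : ℝ := ‖w‖ + 1
  set θ : ℝ := ε / (ε + R)
  set δ : ℝ := ‖a‖ * θ ^ n / (2 * (n + 1))
  have hδ : 0 < δ := by positivity
  have hclose : ∀ᶠ i in l, ∀ k ∈ range (n + 1), ‖(q - p i).coeff k‖ < δ :=
    eventually_all_finset _ |>.2 fun k _ => by
      have h := ((hcoeff k).const_sub (q.coeff k)).norm
      rw [sub_self, norm_zero] at h
      simpa using h.eventually (gt_mem_nhds hδ)
  filter_upwards [hclose] with i hi z hz
  by_contra! hu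
  set u := ‖z - w‖
  have hq : q.natDegree ≤ n := (natDegree_C_mul_le _ _).trans
    ((natDegree_pow_le_of_le n (natDegree_X_sub_C_le w)).trans (mul_one n).le)
  have hbound := norm_eval_le_of_norm_coeff_le
    ((natDegree_sub_le _ _).trans (max_le hq (hdeg i)))
    (fun k hk => (hi k (mem_range.2 (by omega))).le) (ρ := u + R) (z := z)
    (by linarith [norm_nonneg w, norm_nonneg (z - w)]) (by linarith [norm_sub_norm_le z w])
  have heval : (q - p i).eval z = a * (z - w) ^ n := by
    simp [q, (mem_roots'.1 hz).2.eq_zero]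
  have hδn : (n + 1) * δ = ‖a‖ * θ ^ n / 2 := by simp only [δ]; field_simp
  rw [heval, norm_mul, norm_pow, hδn] at hbound
  have hR : 0 < R := by positivity
  have hθ : θ * (u + R) ≤ u := by
    rw [div_mul_eq_mul_div, div_le_iff₀ (by positivity)]
    nlinarith
  have hpow : ‖a‖ * (θ ^ n * (u + R) ^ n) ≤ ‖a‖ * u ^ n := by
    rw [← mul_pow]; gcongr
  have : 0 < ‖a‖ * θ ^ n * (u + R) ^ n := by positivity
  linarith

end RootLocalization

lemma tendsto_add_div_two_mul_add_atBot (j : ℝ) :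
    Tendsto (fun b : ℝ => (b + j) / (2 * b + j)) atBot (𝓝 2⁻¹) := by
  have hden : Tendsto (fun b : ℝ => 2 * b + j) atBot atBot :=
    tendsto_atBot_add_const_right _ j (tendsto_id.const_mul_atBot two_pos)
  have hlim := (tendsto_const_nhds (x := j / 2)).div_atBot hden |>.const_add 2⁻¹
  rw [add_zero] at hlim
  refine hlim.congr' ((hden.eventually (eventually_ne_atBot 0)).mono fun b hb => ?_)
  field_simp
  ring

lemma tendsto_pochRatio_two_mul (k : ℕ) :
    Tendsto (fun b => pochRatio b (2 * b) k) atBot (𝓝 (2⁻¹ ^ k)) := by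
  induction k with
  | zero => simp [pochRatio_zero]
  | succ k ih =>
    simpa only [pochRatio_succ, pow_succ] using ih.mul (tendsto_add_div_two_mul_add_atBot k)

lemma tendsto_coeff_hypPoly_two_mul (n k : ℕ) :
    Tendsto (fun b => (hypPoly n b (2 * b)).coeff k) atBot
      (𝓝 ((C ((-2⁻¹ : ℂ) ^ n) * (X - C 2) ^ n).coeff k)) := by
  have hlim := (Complex.continuous_ofReal.tendsto _).comp
    ((tendsto_pochRatio_two_mul k).const_mul ((-1 : ℝ) ^ k * n.choose k))
  have htarget : (C ((-2⁻¹ : ℂ) ^ n) * (X - C 2) ^ n).coeff k =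
      (((-1 : ℝ) ^ k * n.choose k * 2⁻¹ ^ k : ℝ) : ℂ) := by
    rw [coeff_C_mul, sub_eq_add_neg, ← C_neg, coeff_X_add_C_pow]
    rcases le_or_gt k n with hk | hk
    · obtain ⟨j, rfl⟩ := Nat.exists_eq_add_of_le hk
      rw [Nat.add_sub_cancel_left, pow_add]
      push_cast
      rw [mul_assoc, ← mul_assoc ((-2⁻¹ : ℂ) ^ j), ← mul_pow, neg_pow (2⁻¹ : ℂ)]
      norm_num
      ring
    · simp [Nat.choose_eq_zero_of_lt hk]
  rw [htarget]
  refine hlim.congr fun b => ?_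
  simp [hypPoly_eq_map, coeff_hypPolyReal]

theorem hypPoly_2b_zeros_b_lt_one_sub_n_general (n : ℕ) :
    (∀ b : ℝ, b < 1 - n →
      Multiset.card (hypPoly n b (2 * b)).roots = n ∧
      ∀ z ∈ (hypPoly n b (2 * b)).roots, z.im = 0 ∧ 1 < z.re) ∧
    (∀ ε : ℝ, 0 < ε → ∃ B : ℝ, ∀ b : ℝ, b < B →
      ∀ z ∈ (hypPoly n b (2 * b)).roots, ‖z - 2‖ < ε) := by
  refine ⟨fun b hb => ?_, fun ε hε => ?_⟩
  · obtain ⟨s, hs1, hroots⟩ := exists_roots_hypPoly_two_mul hb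
    refine ⟨by simp [hroots], fun z hz => ?_⟩
    rw [hroots] at hz
    obtain ⟨i, -, rfl⟩ := Multiset.mem_map.1 hz
    exact ⟨Complex.ofReal_im _, hs1 i⟩
  · have hdeg : ∀ b, (hypPoly n b (2 * b)).natDegree ≤ n := fun b => by
      rw [hypPoly_eq_map]; exact natDegree_map_le.trans (natDegree_hypPolyReal_le n b _)
    obtain ⟨B, hB⟩ := eventually_atBot.1 <| eventually_forall_mem_roots_norm_sub_lt
      (by norm_num) hdeg (tendsto_coeff_hypPoly_two_mul n) hε
    exact ⟨B, fun b hb => hB b hb.le⟩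

/-- For `b < 1 - n` all zeros of `F(-n, b; 2b; z)` are real and greater than `1`,
and they converge to `2` as `b → -∞`. -/
theorem hypPoly_2b_zeros_b_lt_one_sub_n (n : ℕ) (hn : 1 ≤ n) :
    (∀ b : ℝ, b < 1 - n →
      Multiset.card (hypPoly n b (2 * b)).roots = n ∧
      ∀ z ∈ (hypPoly n b (2 * b)).roots, z.im = 0 ∧ 1 < z.re) ∧
    (∀ ε : ℝ, 0 < ε → ∃ B : ℝ, ∀ b : ℝ, b < B →
      ∀ z ∈ (hypPoly n b (2 * b)).roots, ‖z - 2‖ < ε) :=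
  hypPoly_2b_zeros_b_lt_one_sub_n_general n
end
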